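/- With notation as above, for every β₁ with |β₁| < δ, the rejection probability P(|X| < f_α) is strictly greater than α, i.e., the folded-normal equivalence test is unbiased. -/

import Mathlib

/-!
For `X ~ N(m, σ²)` and `c > 0`, `P(|X| < c) = Φ((c - m)/σ) - Φ((-c - m)/σ) =: F(m)`.
`F` is even in `m`, and for `m > 0` its derivative `(φ((c + m)/σ) - φ((c - m)/σ))/σ` is negative
because the standard normal density `φ` decreases in `|x|`. So `F` strictly decreases in `|m|`,
and `F(β₁) = F(|β₁|) > F(δ) = α`. The cutoff `f_α` is positive since `F ≤ 0` when `c ≤ 0`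
while `α > 0`.
-/

open MeasureTheory ProbabilityTheory

/-- Standard normal CDF. -/
noncomputable def Phi (t : ℝ) : ℝ := ((gaussianReal 0 1) (Set.Iic t)).toReal

open Set

lemma Phi_eq_integral (t : ℝ) : Phi t = ∫ x in Iic t, gaussianPDFReal 0 1 x := by
  rw [Phi, gaussianReal_apply_eq_integral 0 one_ne_zero,
    ENNReal.toReal_ofReal (setIntegral_nonneg measurableSet_Iic
      fun x _ => gaussianPDFReal_nonneg 0 1 x)]

lemma Phi_sub_Phi (a b : ℝ) : Phi b - Phi a = ∫ x in a..b, gaussianPDFReal 0 1 x := by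
  simp only [Phi_eq_integral]
  exact intervalIntegral.integral_Iic_sub_Iic (integrable_gaussianPDFReal 0 1).integrableOn
    (integrable_gaussianPDFReal 0 1).integrableOn

lemma continuous_gaussianPDFReal (μ : ℝ) (v : NNReal) : Continuous (gaussianPDFReal μ v) := by
  unfold gaussianPDFReal; fun_prop

lemma hasDerivAt_Phi (t : ℝ) : HasDerivAt Phi (gaussianPDFReal 0 1 t) t := by
  have h : Phi = fun u => Phi 0 + ∫ x in (0 : ℝ)..u, gaussianPDFReal 0 1 x := by
    ext u; rw [← Phi_sub_Phi]; ring
  rw [h]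
  exact ((continuous_gaussianPDFReal 0 1).integral_hasStrictDerivAt 0 t).hasDerivAt.const_add _

lemma monotone_Phi : Monotone Phi := fun _ _ hab =>
  ENNReal.toReal_mono (measure_ne_top _ _) (measure_mono (Iic_subset_Iic.2 hab))

lemma toReal_gaussianReal_zero_one_Ioo {a b : ℝ} (hab : a ≤ b) :
    ((gaussianReal 0 1) (Ioo a b)).toReal = Phi b - Phi a := by
  rw [Phi_sub_Phi, gaussianReal_apply_eq_integral 0 one_ne_zero,
    ENNReal.toReal_ofReal (setIntegral_nonneg measurableSet_Ioo
      fun x _ => gaussianPDFReal_nonneg 0 1 x),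
    intervalIntegral.integral_of_le hab, integral_Ioc_eq_integral_Ioo]

lemma gaussianPDFReal_lt_of_sq_lt {μ : ℝ} {v : NNReal} (hv : v ≠ 0) {x y : ℝ}
    (h : (x - μ) ^ 2 < (y - μ) ^ 2) : gaussianPDFReal μ v y < gaussianPDFReal μ v x := by
  have hv' : (0 : ℝ) < v := by positivity
  simp only [gaussianPDFReal_def]
  gcongr

lemma gaussianPDFReal_zero_neg (v : NNReal) (x : ℝ) :
    gaussianPDFReal 0 v (-x) = gaussianPDFReal 0 v x := by
  simp [gaussianPDFReal_def]

lemma Phi_neg_sub_Phi_neg (a b : ℝ) : Phi (-a) - Phi (-b) = Phi b - Phi a := by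
  rw [Phi_sub_Phi, Phi_sub_Phi, ← intervalIntegral.integral_comp_neg]
  simp only [gaussianPDFReal_zero_neg]

noncomputable def foldedNormalCDF (m σ c : ℝ) : ℝ := Phi ((c - m) / σ) - Phi ((-c - m) / σ)

lemma foldedNormalCDF_neg (m σ c : ℝ) : foldedNormalCDF (-m) σ c = foldedNormalCDF m σ c := by
  have h₁ : (c - -m) / σ = -((-c - m) / σ) := by ring
  have h₂ : (-c - -m) / σ = -((c - m) / σ) := by ring
  rw [foldedNormalCDF, foldedNormalCDF, h₁, h₂, Phi_neg_sub_Phi_neg]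

lemma foldedNormalCDF_abs (m σ c : ℝ) : foldedNormalCDF |m| σ c = foldedNormalCDF m σ c := by
  rcases abs_choice m with h | h <;> rw [h]
  exact foldedNormalCDF_neg m σ c

lemma foldedNormalCDF_nonpos {m σ c : ℝ} (hσ : 0 ≤ σ) (hc : c ≤ 0) : foldedNormalCDF m σ c ≤ 0 :=
  sub_nonpos.2 (monotone_Phi (by gcongr; linarith))

lemma hasDerivAt_foldedNormalCDF (m σ c : ℝ) :
    HasDerivAt (fun m => foldedNormalCDF m σ c)
      ((gaussianPDFReal 0 1 ((-c - m) / σ) - gaussianPDFReal 0 1 ((c - m) / σ)) / σ) m := by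
  have hlin (a : ℝ) : HasDerivAt (fun m => (a - m) / σ) (-1 / σ) m :=
    ((hasDerivAt_id m).const_sub a).div_const σ
  exact (((hasDerivAt_Phi _).comp m (hlin c)).sub
    ((hasDerivAt_Phi _).comp m (hlin (-c)))).congr_deriv (by ring)

lemma foldedNormalCDF_strictAntiOn {σ c : ℝ} (hσ : 0 < σ) (hc : 0 < c) :
    StrictAntiOn (fun m => foldedNormalCDF m σ c) (Ici 0) := by
  refine strictAntiOn_of_hasDerivWithinAt_neg (convex_Ici 0)
    (fun m _ => (hasDerivAt_foldedNormalCDF m σ c).continuousAt.continuousWithinAt)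
    (fun m _ => (hasDerivAt_foldedNormalCDF m σ c).hasDerivWithinAt) fun m hm => ?_
  rw [interior_Ici, mem_Ioi] at hm
  refine div_neg_of_neg_of_pos (sub_neg.2 (gaussianPDFReal_lt_of_sq_lt one_ne_zero ?_)) hσ
  rw [sub_zero, sub_zero, div_pow, div_pow]
  exact div_lt_div_of_pos_right (by nlinarith) (by positivity)

lemma gaussianReal_eq_map (m σ : ℝ) :
    gaussianReal m ⟨σ ^ 2, sq_nonneg σ⟩ = (gaussianReal 0 1).map (fun x => σ * x + m) := by
  rw [show (fun x => σ * x + m) = (· + m) ∘ (σ * ·) from rfl,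
    ← Measure.map_map (measurable_add_const m) (measurable_const_mul σ),
    gaussianReal_map_const_mul, gaussianReal_map_add_const, mul_zero, zero_add, mul_one]
  rfl

lemma toReal_gaussianReal_abs_lt {m σ c : ℝ} (hσ : 0 < σ) (hc : 0 ≤ c) :
    ((gaussianReal m ⟨σ ^ 2, sq_nonneg σ⟩) {x : ℝ | |x| < c}).toReal = foldedNormalCDF m σ c := by
  have hpre : (fun x => σ * x + m) ⁻¹' Ioo (-c) c = Ioo ((-c - m) / σ) ((c - m) / σ) := by
    ext x
    simp only [mem_preimage, mem_Ioo, div_lt_iff₀ hσ, lt_div_iff₀ hσ]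
    constructor <;> rintro ⟨h1, h2⟩ <;> constructor <;> linarith
  have hset : {x : ℝ | |x| < c} = Ioo (-c) c := by ext x; simp [abs_lt]
  rw [hset, gaussianReal_eq_map, Measure.map_apply (by fun_prop) measurableSet_Ioo, hpre,
    toReal_gaussianReal_zero_one_Ioo (by gcongr; linarith), foldedNormalCDF]

theorem foldedNormal_test_unbiased_general (δ σ α fα β₁ : ℝ) (hσ : 0 < σ)
    (hα : α ∈ Set.Ioo (0 : ℝ) 1)
    (hq : Phi ((fα - δ) / σ) - Phi ((-fα - δ) / σ) = α) (hβ : |β₁| < δ) :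
    α < ((gaussianReal β₁ ⟨σ ^ 2, sq_nonneg σ⟩) {x : ℝ | |x| < fα}).toReal := by
  change foldedNormalCDF δ σ fα = α at hq
  have hfα : 0 < fα := by
    by_contra! h
    exact (foldedNormalCDF_nonpos hσ.le h).not_gt (hq ▸ hα.1)
  rw [toReal_gaussianReal_abs_lt hσ hfα.le, ← foldedNormalCDF_abs, ← hq]
  exact foldedNormalCDF_strictAntiOn hσ hfα (abs_nonneg β₁) ((abs_nonneg β₁).trans hβ.le) hβ

/-- Unbiasedness of the folded-normal equivalence test: if `X ~ N(β₁, σ²)` and `f_α`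
is the `α`-quantile of the folded normal with parameters `(δ, σ²)`, then for every
`β₁` with `|β₁| < δ` the rejection probability `P(|X| < f_α)` exceeds `α`. -/
theorem foldedNormal_test_unbiased (δ σ α fα β₁ : ℝ) (hδ : 0 < δ) (hσ : 0 < σ)
    (hα : α ∈ Set.Ioo (0 : ℝ) 1)
    (hq : Phi ((fα - δ) / σ) - Phi ((-fα - δ) / σ) = α) (hβ : |β₁| < δ) :
    α < ((gaussianReal β₁ ⟨σ ^ 2, sq_nonneg σ⟩) {x : ℝ | |x| < fα}).toReal :=
  foldedNormal_test_unbiased_general δ σ α fα β₁ hσ hα hq hβ
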